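/- arXiv:0706.2112 — 3 statements merged into one kernel-verified Lean document; each statement's English description precedes it below -/
import Mathlib

section
/- Let F_q be a finite field, m ≥ 2, a ∈ F_q, b ∈ F_q*. Then m · P_m(a,b) = Σ_{t | m} μ(t) · N_{m/t}(a,b), where μ is the Möbius function. -/
/-!
Sort the elements `x` of `F_{q^s}` with trace `a` and norm `b` by the degree `d` of their
minimal polynomial: `x ^ q ^ s = x` exactly when `d ∣ s`, so `N_s = ∑_{d ∣ s} M_d`, where `M_d`
counts those `x` of degree `d`, and Möbius inversion gives `M_m = ∑_{t ∣ m} μ(t) N_{m/t}`.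
An element of degree `m` generates `F_{q^m}`, so its trace and norm are, up to sign, the
coefficients of `x^(m-1)` and `x^0` of its minimal polynomial; and every monic irreducible
polynomial of degree `m` has exactly `m` roots in `F_{q^m}`, so `M_m = m P_m`.
-/

open Polynomial Module IntermediateField

theorem Polynomial.finite_setOf_natDegree_le (R : Type*) [CommRing R] [Finite R] (n : ℕ) :
    {p : R[X] | p.natDegree ≤ n}.Finite := by
  have : Finite (degreeLT R (n + 1)) := Module.finite_of_finite R
  refine (Set.toFinite (degreeLT R (n + 1) : Set R[X])).subset fun p hp => ?_
  rw [SetLike.mem_coe, mem_degreeLT]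
  exact (degree_le_of_natDegree_le hp).trans_lt (WithBot.coe_lt_coe.mpr n.lt_succ_self)

section Generator

variable {F E : Type*} [Field F] [Field E] [Algebra F E] [FiniteDimensional F E]

theorem exists_powerBasis_gen_eq {x : E} (hx : (minpoly F x).natDegree = finrank F E) :
    ∃ pb : PowerBasis F E, pb.gen = x := by
  have hint : IsIntegral F x := .of_finite F x
  have htop : F⟮x⟯ = ⊤ := (Field.primitive_element_iff_minpoly_natDegree_eq F x).mpr hx
  refine ⟨PowerBasis.ofAdjoinEqTop hint ?_, rfl⟩
  rw [← adjoin_simple_toSubalgebra_of_isAlgebraic hint.isAlgebraic, htop, top_toSubalgebra]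

theorem coeff_minpoly_finrank_sub_one_eq_neg_trace {x : E}
    (hx : (minpoly F x).natDegree = finrank F E) :
    (minpoly F x).coeff (finrank F E - 1) = -Algebra.trace F E x := by
  obtain ⟨pb, rfl⟩ := exists_powerBasis_gen_eq hx
  rw [pb.trace_gen_eq_nextCoeff_minpoly, neg_neg,
    nextCoeff_of_natDegree_pos (hx ▸ finrank_pos), hx]

theorem coeff_minpoly_zero_eq_neg_one_pow_mul_norm {x : E}
    (hx : (minpoly F x).natDegree = finrank F E) :
    (minpoly F x).coeff 0 = (-1) ^ finrank F E * Algebra.norm F x := by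
  obtain ⟨pb, rfl⟩ := exists_powerBasis_gen_eq hx
  rw [Algebra.PowerBasis.norm_gen_eq_coeff_zero_minpoly, ← pb.finrank, ← mul_assoc, ← mul_pow,
    neg_one_mul, neg_neg, one_pow, one_mul]

end Generator

section FiniteField

variable {F E : Type*} [Field F] [Finite F] [Field E] [Finite E] [Algebra F E]

theorem pow_card_pow_eq_self_iff_natDegree_minpoly_dvd (x : E) (s : ℕ) :
    x ^ Nat.card F ^ s = x ↔ (minpoly F x).natDegree ∣ s := by
  rw [(minpoly.irreducible (.of_finite F x)).natDegree_dvd_iff_dvd_X_pow_card_pow_sub_X,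
    minpoly.dvd_iff, map_sub, map_pow, aeval_X, sub_eq_zero]

theorem card_minpoly_eq_of_natDegree_dvd_finrank {f : F[X]} (hmonic : f.Monic)
    (hirr : Irreducible f) (hdvd : f.natDegree ∣ finrank F E) :
    Nat.card {x : E // minpoly F x = f} = f.natDegree := by
  have := Fintype.ofFinite E
  have hsplit : (f.map (algebraMap F E)).Splits := by
    rw [hirr.natDegree_dvd_iff_dvd_X_pow_card_pow_sub_X, ← Module.natCard_eq_pow_finrank,
      ← Fintype.card_eq_nat_card] at hdvd
    exact (FiniteField.isSplittingField_sub E F).splits.of_dvd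
      (map_ne_zero (FiniteField.X_pow_card_sub_X_ne_zero F Fintype.one_lt_card))
      (map_dvd (algebraMap F E) hdvd)
  rw [← card_rootSet_eq_natDegree (PerfectField.separable_of_irreducible hirr) hsplit,
    ← Nat.card_eq_fintype_card]
  refine Nat.card_congr (Equiv.subtypeEquivRight fun x => ?_)
  rw [mem_rootSet_of_ne hmonic.ne_zero]
  exact ⟨fun h => h ▸ minpoly.aeval F x,
    fun h => (minpoly.eq_of_irreducible_of_monic hirr h hmonic).symm⟩

theorem card_natDegree_minpoly_eq_finrank_and (Q : F[X] → Prop) :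
    Nat.card {x : E // (minpoly F x).natDegree = finrank F E ∧ Q (minpoly F x)} =
      finrank F E *
        Nat.card {f : F[X] // f.Monic ∧ Irreducible f ∧ f.natDegree = finrank F E ∧ Q f} := by
  set n := finrank F E
  let q (f : F[X]) : Prop := f.Monic ∧ Irreducible f ∧ f.natDegree = n ∧ Q f
  have : Finite (Subtype q) :=
    ((finite_setOf_natDegree_le F n).subset fun f hf => hf.2.2.1.le).to_subtype
  have := Fintype.ofFinite (Subtype q)
  have hq (x : E) : (minpoly F x).natDegree = n ∧ Q (minpoly F x) ↔ q (minpoly F x) := by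
    have hint : IsIntegral F x := .of_finite F x
    simp only [q, minpoly.monic hint, minpoly.irreducible hint, true_and]
  rw [← Nat.card_congr (Equiv.sigmaSubtypeFiberEquivSubtype (minpoly F) hq), Nat.card_sigma,
    Finset.sum_congr rfl fun (f : Subtype q) _ =>
      (card_minpoly_eq_of_natDegree_dvd_finrank f.2.1 f.2.2.1 (by rw [f.2.2.2.1])).trans f.2.2.2.1,
    Finset.sum_const, Finset.card_univ, smul_eq_mul, mul_comm, Nat.card_eq_fintype_card]

theorem card_pow_card_pow_eq_self_and (p : E → Prop) {s : ℕ} (hs : s ≠ 0) :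
    Nat.card {x : E // x ^ Nat.card F ^ s = x ∧ p x} =
      ∑ d ∈ s.divisors, Nat.card {x : E // (minpoly F x).natDegree = d ∧ p x} := by
  classical
  have := Fintype.ofFinite E
  simp only [Nat.card_eq_fintype_card, Fintype.card_subtype,
    pow_card_pow_eq_self_iff_natDegree_minpoly_dvd]
  rw [Finset.card_eq_sum_card_fiberwise (f := fun x => (minpoly F x).natDegree)
    (t := s.divisors) fun x hx => Nat.mem_divisors.mpr ⟨(Finset.mem_filter.mp hx).2.1, hs⟩]
  refine Finset.sum_congr rfl fun d hd => congrArg Finset.card ?_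
  rw [Finset.filter_filter]
  refine Finset.filter_congr fun x _ => ⟨fun ⟨⟨_, hp⟩, hdeg⟩ => ⟨hdeg, hp⟩, fun ⟨hdeg, hp⟩ =>
    ⟨⟨hdeg ▸ Nat.dvd_of_mem_divisors hd, hp⟩, hdeg⟩⟩

theorem sum_moebius_mul_card_pow_card_pow_eq_self_and (p : E → Prop) {m : ℕ} (hm : m ≠ 0) :
    ∑ t ∈ m.divisors, (ArithmeticFunction.moebius t : ℤ) *
        Nat.card {x : E // x ^ Nat.card F ^ (m / t) = x ∧ p x} =
      Nat.card {x : E // (minpoly F x).natDegree = m ∧ p x} := by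
  have := (ArithmeticFunction.sum_eq_iff_sum_mul_moebius_eq (R := ℤ)
    (f := fun d => Nat.card {x : E // (minpoly F x).natDegree = d ∧ p x})
    (g := fun s => Nat.card {x : E // x ^ Nat.card F ^ s = x ∧ p x})).mp
    (fun s hs => by rw [card_pow_card_pow_eq_self_and p hs.ne']; push_cast; rfl)
    m (Nat.pos_of_ne_zero hm)
  simp only [Int.cast_id] at this
  rwa [Nat.sum_divisorsAntidiagonal (fun t s => ArithmeticFunction.moebius t *
    (Nat.card {x : E // x ^ Nat.card F ^ s = x ∧ p x} : ℤ))] at this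

end FiniteField

theorem stmt0_general (F E : Type*) [Field F] [Fintype F] [Field E] [Fintype E] [Algebra F E]
    (m : ℕ) (hrank : Module.finrank F E = m) (a b : F) (hb : b ≠ 0)
    (P : ℕ) (hP : P = Nat.card {f : F[X] // f.Monic ∧ Irreducible f ∧ f.natDegree = m ∧
      f.coeff (m - 1) = -a ∧ f.coeff 0 = (-1) ^ m * b})
    (N : ℕ → ℕ) (hN : ∀ t, N t = Nat.card {x : E // x ≠ 0 ∧ x ^ (Fintype.card F) ^ t = x ∧
      Algebra.trace F E x = a ∧ Algebra.norm F (x : E) = b}) :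
    (m : ℤ) * P = ∑ t ∈ m.divisors, ArithmeticFunction.moebius t * (N (m / t) : ℤ) := by
  subst hrank hP
  have hcoeff (x : E) (hx : (minpoly F x).natDegree = finrank F E) :
      (x ≠ 0 ∧ Algebra.trace F E x = a ∧ Algebra.norm F x = b) ↔
        (minpoly F x).coeff (finrank F E - 1) = -a ∧
          (minpoly F x).coeff 0 = (-1) ^ finrank F E * b := by
    rw [coeff_minpoly_finrank_sub_one_eq_neg_trace hx,
      coeff_minpoly_zero_eq_neg_one_pow_mul_norm hx, neg_inj,
      mul_right_inj' (pow_ne_zero _ (neg_ne_zero.mpr one_ne_zero))]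
    exact ⟨fun h => h.2, fun h => ⟨fun hx0 => hb (by rw [← h.2, hx0, Algebra.norm_zero]), h⟩⟩
  simp_rw [hN, Fintype.card_eq_nat_card, ← and_assoc, and_comm (a := (_ : E) ≠ 0), and_assoc]
  rw [sum_moebius_mul_card_pow_card_pow_eq_self_and _ finrank_pos.ne',
    ← Nat.cast_mul, ← card_natDegree_minpoly_eq_finrank_and]
  exact congrArg _ (Nat.card_congr (Equiv.subtypeEquivRight fun x =>
    and_congr_right (hcoeff x))).symm

/-- Let `F = F_q` be a finite field, `E = F_{q^m}` an extension of degree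
`m ≥ 2`, `a ∈ F`, `b ∈ Fˣ`.  Writing `P m a b` for the number of monic irreducible
polynomials of degree `m` over `F` with coefficient of `x^(m-1)` equal to `-a` and constant
coefficient `(-1)^m * b`, and `N t a b` for the number of nonzero `x ∈ F_{q^t} ⊆ E`
(characterized by `x^(q^t) = x`) with trace `a` and norm `b` from `E` to `F`, we have
`m * P m a b = ∑_{t ∣ m} μ(t) * N (m/t) a b`. -/
theorem stmt0 (F E : Type*) [Field F] [Fintype F] [Field E] [Fintype E] [Algebra F E]
    (m : ℕ) (hm : 2 ≤ m) (hrank : Module.finrank F E = m) (a b : F) (hb : b ≠ 0)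
    (P : ℕ) (hP : P = Nat.card {f : F[X] // f.Monic ∧ Irreducible f ∧ f.natDegree = m ∧
      f.coeff (m - 1) = -a ∧ f.coeff 0 = (-1) ^ m * b})
    (N : ℕ → ℕ) (hN : ∀ t, N t = Nat.card {x : E // x ≠ 0 ∧ x ^ (Fintype.card F) ^ t = x ∧
      Algebra.trace F E x = a ∧ Algebra.norm F (x : E) = b}) :
    (m : ℤ) * P = ∑ t ∈ m.divisors, ArithmeticFunction.moebius t * (N (m / t) : ℤ) :=
  stmt0_general F E m hrank a b hb P hP N hN
end

section
/- Let F_q be a finite field, n a divisor of q−1, t ≥ 1, α ∈ F_{q^t}*, and let e be the canonical additive character of F_{q^t}. Then Σ_{x ∈ F_{q^t}*} e(α·x^n) = Σ_{λ ∈ H_n} G(λ^{-1} ∘ N_t) · λ(N_t(α)), where H_n is the subgroup of order n of the multiplicative character group of F_q, N_t is the norm from F_{q^t} to F_q, and G(ψ) = Σ_{x ∈ F_{q^t}*} e(x)·ψ(x) is the Gauss sum. -/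
/-- The canonical additive character of a finite field `F` of characteristic `p`:
`x ↦ exp(2πi · Tr_{F/F_p}(x) / p)`. -/
noncomputable def canonChar (p : ℕ) (F : Type*) [Field F] [Fintype F] [CharP F p] (x : F) : ℂ :=
  letI := ZMod.algebra F p
  Complex.exp (2 * Real.pi * Complex.I * ((Algebra.trace (ZMod p) F x).val / p))


/-!
Choose a character `χ` of `F` of order `n`, so that `H_n = {χ ^ j | j < n}`. Since the norm
`Eˣ → Fˣ` is surjective, `χ⁻¹ ∘ N` has order `n` on the cyclic group `Eˣ`; hence its kernel is the
subgroup of `n`-th powers and `#{x | x ^ n = y} = ∑_{j < n} (χ ^ j)⁻¹ (N y)`. Grouping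
`∑_x e(α x ^ n)` by `y = x ^ n` and substituting `x ↦ α x` in each Gauss sum gives the identity.
-/

open Finset

section Cyclic

variable {G : Type*} [CommGroup G] [Fintype G] [DecidableEq G] [IsCyclic G] {n : ℕ}

theorem IsCyclic.card_filter_pow_eq_of_exists (hn : n ∣ Nat.card G) {y : G}
    (hy : ∃ x, x ^ n = y) : #{x : G | x ^ n = y} = n := by
  have hfiber := MonoidHom.card_fiber_eq_of_mem_range (powMonoidHom n : G →* G) hy ⟨1, one_pow n⟩
  have hker := IsCyclic.card_powMonoidHom_ker G n
  rw [Nat.gcd_eq_right hn, Nat.card_eq_fintype_card, Fintype.card_subtype] at hker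
  simp only [powMonoidHom_apply] at hfiber
  simpa only [hfiber, MonoidHom.mem_ker, powMonoidHom_apply] using hker

theorem IsCyclic.filter_pow_orderOf_eq_one_eq_image (g : G) :
    ({x : G | x ^ orderOf g = 1} : Finset G) = (range (orderOf g)).image (g ^ ·) := by
  refine (eq_of_subset_of_card_le (fun x hx => ?_) ?_).symm
  · obtain ⟨k, -, rfl⟩ := mem_image.mp hx
    rw [mem_filter, pow_right_comm, pow_orderOf_eq_one, one_pow]
    exact ⟨mem_univ _, rfl⟩
  · rw [IsCyclic.card_filter_pow_eq_of_exists (orderOf_dvd_natCard g) ⟨1, one_pow _⟩,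
      card_image_of_injOn (by simpa using pow_injOn_Iio_orderOf), card_range]

theorem IsCyclic.card_filter_pow_eq_eq_sum_pow {K : Type*} [Field K] (hn : n ∣ Nat.card G)
    (ψ : G →* K) (hψ : ∀ y, ψ y = 1 ↔ ∃ x, x ^ n = y) (y : G) :
    (#{x : G | x ^ n = y} : K) = ∑ j ∈ range n, ψ y ^ j := by
  by_cases hy : ψ y = 1
  · simp [IsCyclic.card_filter_pow_eq_of_exists hn ((hψ y).1 hy), hy]
  · have hempty : #{x : G | x ^ n = y} = 0 :=
      card_eq_zero.mpr (filter_eq_empty_iff.mpr fun x _ hx => hy ((hψ y).2 ⟨x, hx⟩))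
    have hψn : ψ y ^ n = 1 := by rw [← map_pow]; exact (hψ _).2 ⟨y, rfl⟩
    rw [hempty, geom_sum_eq hy, hψn, sub_self, zero_div, Nat.cast_zero]

end Cyclic

theorem IsCyclic.sum_pow_orderOf_eq_one_eq_sum_range {G M : Type*} [CommGroup G] [Finite G]
    [IsCyclic G] [AddCommMonoid M] (g : G) (f : G → M) :
    ∑ x ∈ (Set.toFinite {x : G | x ^ orderOf g = 1}).toFinset, f x =
      ∑ j ∈ range (orderOf g), f (g ^ j) := by
  let _ : Fintype G := Fintype.ofFinite G
  let _ : DecidableEq G := Classical.decEq G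
  rw [Set.Finite.toFinset_ofPred, IsCyclic.filter_pow_orderOf_eq_one_eq_image,
    sum_image (by simpa using pow_injOn_Iio_orderOf)]

theorem exists_pow_orderOf_eq_of_map_eq_one {G M : Type*} [Monoid G] [Monoid M] (ψ : G →* M)
    {g : G} (hg : ∀ x, x ∈ Submonoid.powers g) {y : G} (hy : ψ y = 1) :
    ∃ x, x ^ orderOf (ψ g) = y := by
  obtain ⟨k, rfl⟩ := hg y
  rw [map_pow, ← orderOf_dvd_iff_pow_eq_one] at hy
  obtain ⟨m, rfl⟩ := hy
  exact ⟨g ^ m, by rw [← pow_mul, mul_comm]⟩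

namespace MulChar

instance isCyclic {M R : Type*} [CommMonoid M] [Fintype M] [DecidableEq M] [IsCyclic Mˣ]
    [CommRing R] [IsDomain R] : IsCyclic (MulChar M R) :=
  isCyclic_of_surjective _ (equiv_rootsOfUnity M R).symm.surjective

variable {R R' : Type*} [CommMonoid R] [CommMonoidWithZero R']

theorem orderOf_apply_of_forall_mem_zpowers (χ : MulChar R R') {a : Rˣ}
    (ha : ∀ x, x ∈ Subgroup.zpowers a) : orderOf (χ a) = orderOf χ :=
  orderOf_eq_orderOf_iff.mpr fun k => by
    rw [MulChar.eq_iff ha (χ ^ k) 1, MulChar.pow_apply_coe, MulChar.one_apply_coe]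

theorem inv_apply_mul_mul_apply (μ : MulChar R R') (a : Rˣ) (b : R) :
    μ⁻¹ (a * b) * μ a = μ⁻¹ b := by
  rw [map_mul, mul_right_comm, ← MulChar.mul_apply, inv_mul_cancel, one_apply_coe, one_mul]

variable {F : Type*} [Field F] (E : Type*) [Field E] [Algebra F E]

noncomputable def compNormUnits (χ : MulChar F R') : Eˣ →* R' :=
  χ.toMonoidHom.comp ((Units.coeHom F).comp (Units.map (Algebra.norm F)))

theorem pow_compNormUnits_apply (χ : MulChar F R') (j : ℕ) (y : Eˣ) :
    χ.compNormUnits E y ^ j = (χ ^ j) (Algebra.norm F (y : E)) :=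
  (χ.pow_apply_coe j (Units.map (Algebra.norm F : E →* F) y)).symm

theorem compNormUnits_eq_one_iff [Finite E] (χ : MulChar F R') (y : Eˣ) :
    χ.compNormUnits E y = 1 ↔ ∃ x : Eˣ, x ^ orderOf χ = y := by
  obtain ⟨g, hg⟩ := IsCyclic.exists_monoid_generator (α := Eˣ)
  have hNg (a : Fˣ) : a ∈ Subgroup.zpowers (Units.map (Algebra.norm F : E →* F) g) := by
    obtain ⟨x, rfl⟩ := FiniteField.unitsMap_norm_surjective F E a
    obtain ⟨k, rfl⟩ := hg x
    rw [map_pow]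
    exact pow_mem (Subgroup.mem_zpowers _) k
  have horder : orderOf (χ.compNormUnits E g) = orderOf χ :=
    χ.orderOf_apply_of_forall_mem_zpowers hNg
  constructor
  · intro hy
    simpa only [horder] using exists_pow_orderOf_eq_of_map_eq_one _ hg hy
  · rintro ⟨x, rfl⟩
    rw [map_pow, pow_compNormUnits_apply, pow_orderOf_eq_one]
    exact one_apply_coe (Units.map (Algebra.norm F : E →* F) x)

end MulChar

section FiniteField

variable {F E : Type*} [Field F] [Field E] [Fintype E] [DecidableEq E] [Algebra F E]

theorem sum_mul_inv_apply_norm_mul_apply_norm {R : Type*} [CommSemiring R] (f : E → R)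
    (μ : MulChar F R) (a : Eˣ) :
    (∑ x : Eˣ, f x * μ⁻¹ (Algebra.norm F (x : E))) * μ (Algebra.norm F (a : E)) =
      ∑ y : Eˣ, f (a * y) * μ⁻¹ (Algebra.norm F (y : E)) := by
  rw [sum_mul, ← Equiv.sum_comp (Equiv.mulLeft a)]
  refine sum_congr rfl fun y _ => ?_
  rw [mul_assoc, Equiv.coe_mulLeft, Units.val_mul, map_mul]
  exact congrArg _ (μ.inv_apply_mul_mul_apply (Units.map (Algebra.norm F : E →* F) a) _)

variable [Fintype F]

theorem card_filter_pow_eq_eq_sum_inv_pow_apply_norm {K : Type*} [Field K] (χ : MulChar F K)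
    (y : Eˣ) : (#{x : Eˣ | x ^ orderOf χ = y} : K) =
      ∑ j ∈ range (orderOf χ), (χ ^ j)⁻¹ (Algebra.norm F (y : E)) := by
  classical
  have hdvd : orderOf χ ∣ Nat.card Eˣ := by
    have hF := χ.orderOf_dvd_card_sub_one
    rw [← Fintype.card_units, ← Nat.card_eq_fintype_card] at hF
    exact hF.trans (Subgroup.card_dvd_of_surjective _ (FiniteField.unitsMap_norm_surjective F E))
  have hψ := χ⁻¹.compNormUnits_eq_one_iff E
  rw [orderOf_inv] at hψ
  simp_rw [IsCyclic.card_filter_pow_eq_eq_sum_pow hdvd _ hψ y, MulChar.pow_compNormUnits_apply,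
    inv_pow]

theorem sum_apply_mul_pow_eq_sum_mulChar (f : E → ℂ) {n : ℕ} (hn : n ∣ Fintype.card F - 1)
    {α : E} (hα : α ≠ 0) :
    ∑ x : Eˣ, f (α * (x : E) ^ n) =
      ∑ l ∈ (Set.toFinite {l : MulChar F ℂ | l ^ n = 1}).toFinset,
        (∑ x : Eˣ, f x * l⁻¹ (Algebra.norm F (x : E))) * l (Algebra.norm F α) := by
  classical
  have hn0 : n ≠ 0 := by
    rintro rfl
    have := Fintype.one_lt_card (α := F)
    rw [zero_dvd_iff] at hn
    omega
  obtain ⟨χ, rfl⟩ := MulChar.exists_mulChar_orderOf F hn (Complex.isPrimitiveRoot_exp _ hn0)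
  let a := Units.mk0 α hα
  calc ∑ x : Eˣ, f (α * (x : E) ^ orderOf χ)
      = ∑ y : Eˣ, (#{x : Eˣ | x ^ orderOf χ = y} : ℂ) * f (α * y) := by
        simp_rw [← Units.val_pow_eq_pow_val]
        rw [← sum_fiberwise' univ (· ^ orderOf χ) fun y : Eˣ => f (α * y)]
        simp only [sum_const, nsmul_eq_mul]
    _ = ∑ j ∈ range (orderOf χ), ∑ y : Eˣ, f (α * y) * (χ ^ j)⁻¹ (Algebra.norm F (y : E)) := by
        simp_rw [card_filter_pow_eq_eq_sum_inv_pow_apply_norm, sum_mul]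
        rw [sum_comm]
        simp_rw [mul_comm]
    _ = ∑ j ∈ range (orderOf χ),
          (∑ x : Eˣ, f x * (χ ^ j)⁻¹ (Algebra.norm F (x : E))) * (χ ^ j) (Algebra.norm F α) :=
        sum_congr rfl fun j _ => (sum_mul_inv_apply_norm_mul_apply_norm f (χ ^ j) a).symm
    _ = _ := (IsCyclic.sum_pow_orderOf_eq_one_eq_sum_range χ fun l =>
          (∑ x : Eˣ, f x * l⁻¹ (Algebra.norm F (x : E))) * l (Algebra.norm F α)).symm

end FiniteField

theorem stmt2_general (p : ℕ) (F E : Type*) [Field F] [Fintype F] [Field E] [Fintype E] [Algebra F E]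
    [CharP E p] [DecidableEq E] (n : ℕ) (hn : n ∣ Fintype.card F - 1) (α : E) (hα : α ≠ 0) :
    ∑ x : Eˣ, canonChar p E (α * (x : E) ^ n) =
      ∑ l ∈ (Set.toFinite {l : MulChar F ℂ | l ^ n = 1}).toFinset,
        (∑ x : Eˣ, canonChar p E (x : E) * l⁻¹ (Algebra.norm F (x : E))) *
          l (Algebra.norm F α) :=
  sum_apply_mul_pow_eq_sum_mulChar (canonChar p E) hn hα

/-- Let `F = F_q` be a finite field, `n ∣ q - 1`, `E = F_{q^t}` an extension
of degree `t ≥ 1`, `α ∈ Eˣ`, and `e` the canonical additive character of `E`.  Then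
`∑_{x ∈ Eˣ} e(α x^n) = ∑_{λ ∈ H_n} G(λ⁻¹ ∘ N_t) · λ(N_t α)`, where `H_n` is the subgroup of
order `n` of the multiplicative character group of `F`, i.e. `{λ | λ^n = 1}`, `N_t` is the
norm from `E` to `F` and `G(λ⁻¹ ∘ N_t) = ∑_{x ∈ Eˣ} e(x) · λ⁻¹(N_t x)` is a Gauss sum. -/
theorem stmt2 (p : ℕ) (F E : Type*) [Field F] [Fintype F] [Field E] [Fintype E] [Algebra F E]
    [CharP F p] [CharP E p] [DecidableEq E] (n t : ℕ) (hn : n ∣ Fintype.card F - 1) (ht : 1 ≤ t)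
    (hrank : Module.finrank F E = t) (α : E) (hα : α ≠ 0) :
    ∑ x : Eˣ, canonChar p E (α * (x : E) ^ n) =
      ∑ l ∈ (Set.toFinite {l : MulChar F ℂ | l ^ n = 1}).toFinset,
        (∑ x : Eˣ, canonChar p E (x : E) * l⁻¹ (Algebra.norm F (x : E))) *
          l (Algebra.norm F α) :=
  stmt2_general p F E n hn α hα
end

section
/- Let F_q be a finite field of characteristic 2 and c ∈ F_q*. Then k_2(c) = k_1(c)² − q, where k_n(c) is the n-dimensional Kloosterman sum over F_q. -/
open Polynomial

/-- The `n`-dimensional (hyper-)Kloosterman sum over `F` at `c`, with respect to the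
canonical additive character:
`k_n(c) = ∑_{x₁,…,xₙ ∈ Fˣ} χ(x₁ + ⋯ + xₙ + c/(x₁⋯xₙ))`. -/
noncomputable def kloos (p : ℕ) (F : Type*) [Field F] [Fintype F] [CharP F p]
    (n : ℕ) (c : F) : ℂ :=
  letI := Classical.decEq F
  ∑ x : Fin n → Fˣ, canonChar p F ((∑ i, (x i : F)) + c / ∏ i, (x i : F))

/-!
Expand `k₁(c)²` as a double sum over `u, v ≠ 0` and substitute `v = u + x`, then `u = x r`.
In characteristic 2 one has `1/r + 1/(r + 1) = 1/(r² + r)`, so for `x ≠ 0` the inner sum runs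
over `χ(x + c/(x (r² + r)))` with `r ∉ {0, 1}`. By additive Hilbert 90 the map `r ↦ r² + r` is
two-to-one onto the kernel of the absolute trace, i.e. `t` has `1 + χ(t)` preimages. The part
weighted by `1` sums to `-χ(x)`, and the part weighted by `χ(t)` is exactly the summand
`χ(x + t + c/(x t))` of `k₂(c)`. Finally the diagonal `x = 0` contributes `q - 1` and the terms
`-χ(x)` add up to `1`.
-/

open Finset

attribute [local instance] ZMod.algebra

section Reindexing

variable {M : Type*} [AddCommMonoid M]

lemma sum_units_eq_sum_compl_zero {G₀ : Type*} [GroupWithZero G₀] [Fintype G₀] [DecidableEq G₀]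
    (f : G₀ → M) : ∑ u : G₀ˣ, f u = ∑ x ∈ {0}ᶜ, f x := by
  refine (Fintype.sum_equiv unitsEquivNeZero _ (fun x : {a : G₀ // a ≠ 0} => f x)
    fun _ => rfl).trans ?_
  exact (sum_subtype _ (by simp) f).symm

lemma sum_compl_zero_div {K : Type*} [CommGroupWithZero K] [Fintype K] [DecidableEq K] {a : K}
    (ha : a ≠ 0) (f : K → M) : ∑ t ∈ {0}ᶜ, f (a / t) = ∑ t ∈ {0}ᶜ, f t := by
  refine sum_nbij' (a / ·) (a / ·) (by simp [ha]) (by simp [ha]) (fun t _ => ?_) (fun t _ => ?_)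
    fun _ _ => rfl <;> simp [div_div_cancel₀ ha]

end Reindexing

lemma AddMonoidHom.card_ker_mul_card_range {G H : Type*} [AddGroup G] [AddGroup H] (f : G →+ H) :
    Nat.card f.ker * Nat.card f.range = Nat.card G := by
  rw [← AddSubgroup.index_ker, AddSubgroup.card_mul_index]

lemma AddChar.sum_compl_zero_eq_neg_one {A R : Type*} [AddGroup A] [Fintype A] [DecidableEq A]
    [CommRing R] [IsDomain R] {ψ : AddChar A R} (hψ : ψ ≠ 1) : ∑ x ∈ {0}ᶜ, ψ x = -1 := by
  have h := AddChar.sum_eq_zero_of_ne_one hψ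
  rw [Fintype.sum_eq_add_sum_compl 0, AddChar.map_zero_eq_one] at h
  linear_combination h

section CanonicalCharacter

variable (p : ℕ) (F : Type*) [Field F] [Fintype F] [CharP F p]

noncomputable def canonAddChar : AddChar F ℂ :=
  haveI : NeZero p := ⟨(CharP.char_is_prime F p).ne_zero⟩
  ZMod.stdAddChar.compAddMonoidHom (Algebra.trace (ZMod p) F).toAddMonoidHom

variable {p F}

lemma canonAddChar_apply (x : F) : canonAddChar p F x = canonChar p F x := by
  simp [canonAddChar, canonChar, ZMod.stdAddChar_apply, ZMod.toCircle_apply, mul_div_assoc]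

lemma canonAddChar_eq_one_iff {x : F} :
    canonAddChar p F x = 1 ↔ Algebra.trace (ZMod p) F x = 0 := by
  have : NeZero p := ⟨(CharP.char_is_prime F p).ne_zero⟩
  rw [← ZMod.injective_stdAddChar.eq_iff, AddChar.map_zero_eq_one]
  rfl

lemma canonAddChar_ne_one : canonAddChar p F ≠ 1 := by
  have : Fact p.Prime := ⟨CharP.char_is_prime F p⟩
  obtain ⟨x, hx⟩ := Algebra.trace_surjective (ZMod p) F 1
  refine AddChar.ne_one_iff.2 ⟨x, ?_⟩
  rw [Ne, canonAddChar_eq_one_iff, hx]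
  exact one_ne_zero

lemma trace_pow_char (x : F) : Algebra.trace (ZMod p) F (x ^ p) = Algebra.trace (ZMod p) F x := by
  have : Fact p.Prime := ⟨CharP.char_is_prime F p⟩
  have h := Algebra.trace_eq_of_algEquiv (FiniteField.frobeniusAlgEquivOfAlgebraic (ZMod p) F) x
  rwa [FiniteField.coe_frobeniusAlgEquivOfAlgebraic, ZMod.card] at h

variable [DecidableEq F]

lemma kloos_one (c : F) : kloos p F 1 c = ∑ u ∈ {0}ᶜ, canonAddChar p F (u + c / u) := by
  rw [kloos, Subsingleton.elim (Classical.decEq F) ‹_›, ← sum_units_eq_sum_compl_zero]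
  refine Fintype.sum_equiv (Equiv.funUnique (Fin 1) Fˣ) _ _ fun x => ?_
  rw [canonAddChar_apply]
  simp only [Fin.sum_univ_one, Fin.prod_univ_one]
  rfl

lemma kloos_two (c : F) :
    kloos p F 2 c = ∑ u ∈ {0}ᶜ, ∑ v ∈ {0}ᶜ, canonAddChar p F (u + v + c / (u * v)) := by
  rw [kloos, Subsingleton.elim (Classical.decEq F) ‹_›]
  simp_rw [← sum_units_eq_sum_compl_zero, ← Fintype.sum_prod_type']
  refine Fintype.sum_equiv (piFinTwoEquiv fun _ => Fˣ) _ _ fun x => ?_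
  rw [canonAddChar_apply]
  simp only [Fin.sum_univ_two, Fin.prod_univ_two]
  rfl

end CanonicalCharacter

section CharTwo

variable {F : Type*} [Field F] [CharP F 2]

variable (F) in
def sqAddSelf : F →+ F := (frobenius F 2 : F →+* F).toAddMonoidHom + AddMonoidHom.id F

lemma sqAddSelf_apply (r : F) : sqAddSelf F r = r ^ 2 + r := rfl

lemma sq_add_self_eq_zero_iff {r : F} : r ^ 2 + r = 0 ↔ r = 0 ∨ r = 1 := by
  rw [sq, ← mul_add_one, mul_eq_zero, CharTwo.add_eq_zero]

lemma sq_add_self_eq_iff {r s : F} : s ^ 2 + s = r ^ 2 + r ↔ s = r ∨ s = r + 1 := by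
  rw [← CharTwo.add_eq_zero, ← sqAddSelf_apply, ← sqAddSelf_apply, ← map_add, sqAddSelf_apply,
    sq_add_self_eq_zero_iff, CharTwo.add_eq_zero, CharTwo.add_eq_iff_eq_add, add_comm 1 r]

lemma inv_add_inv_add_one {r : F} (hr₀ : r ≠ 0) (hr₁ : r ≠ 1) :
    r⁻¹ + (r + 1)⁻¹ = (r ^ 2 + r)⁻¹ := by
  have hr₁' : r + 1 ≠ 0 := by rwa [Ne, CharTwo.add_eq_zero]
  field_simp
  linear_combination r * CharTwo.two_eq_zero (R := F)

variable [Fintype F]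

local notation "χ" => canonAddChar 2 F

lemma range_sqAddSelf :
    (sqAddSelf F).range = (Algebra.trace (ZMod 2) F).toAddMonoidHom.ker := by
  have hle : (sqAddSelf F).range ≤ (Algebra.trace (ZMod 2) F).toAddMonoidHom.ker := by
    rintro _ ⟨r, rfl⟩
    simp [sqAddSelf_apply, trace_pow_char, CharTwo.add_self_eq_zero]
  refine AddSubgroup.eq_of_le_of_card_ge hle (Nat.le_of_mul_le_mul_left ?_ two_pos)
  have hker : Nat.card (sqAddSelf F).ker = 2 := by
    have : ((sqAddSelf F).ker : Set F) = {0, 1} := by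
      ext r
      simp [sqAddSelf_apply, sq_add_self_eq_zero_iff]
    rw [← SetLike.coe_sort_coe, Nat.card_coe_set_eq, this, Set.ncard_pair zero_ne_one]
  have hrange : Nat.card (Algebra.trace (ZMod 2) F).toAddMonoidHom.range = 2 := by
    rw [AddMonoidHom.range_eq_top.2 (Algebra.trace_surjective (ZMod 2) F), AddSubgroup.card_top,
      Nat.card_zmod]
  have h₁ := (sqAddSelf F).card_ker_mul_card_range
  have h₂ := (Algebra.trace (ZMod 2) F).toAddMonoidHom.card_ker_mul_card_range
  rw [hker] at h₁
  rw [hrange] at h₂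
  omega

lemma canonAddChar_two_eq_neg_one {t : F} (ht : Algebra.trace (ZMod 2) F t ≠ 0) : χ t = -1 := by
  have hsq : χ t * χ t = 1 := by
    rw [← AddChar.map_add_eq_mul, CharTwo.add_self_eq_zero, AddChar.map_zero_eq_one]
  exact (mul_self_eq_one_iff.1 hsq).resolve_left (mt canonAddChar_eq_one_iff.1 ht)

variable [DecidableEq F]

lemma card_filter_sq_add_self_eq (t : F) : (#{r | r ^ 2 + r = t} : ℂ) = 1 + χ t := by
  by_cases ht : Algebra.trace (ZMod 2) F t = 0
  · obtain ⟨r, rfl⟩ : t ∈ (sqAddSelf F).range := by rwa [range_sqAddSelf]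
    rw [sqAddSelf_apply] at ht ⊢
    have hfibre : ({s | s ^ 2 + s = r ^ 2 + r} : Finset F) = {r, r + 1} := by
      ext s
      simp [sq_add_self_eq_iff]
    rw [canonAddChar_eq_one_iff.2 ht, hfibre, card_pair (by simp)]
    norm_num
  · have hempty : ({r | r ^ 2 + r = t} : Finset F) = ∅ := by
      refine filter_eq_empty_iff.2 fun r _ hr => ht ?_
      have hr : t ∈ (sqAddSelf F).range := ⟨r, hr⟩
      rwa [range_sqAddSelf] at hr
    rw [canonAddChar_two_eq_neg_one ht, hempty]
    norm_num

lemma sum_sq_add_self (f : F → ℂ) : ∑ r, f (r ^ 2 + r) = ∑ t, (1 + χ t) * f t := by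
  rw [← sum_fiberwise univ (fun r => r ^ 2 + r)]
  refine sum_congr rfl fun t _ => ?_
  rw [sum_congr rfl fun r hr => congrArg f (mem_filter.1 hr).2, sum_const, nsmul_eq_mul,
    card_filter_sq_add_self_eq]

lemma sum_compl_zero_one_sq_add_self (f : F → ℂ) :
    ∑ r ∈ {0, 1}ᶜ, f (r ^ 2 + r) = ∑ t ∈ {0}ᶜ, (1 + χ t) * f t := by
  have h := sum_sq_add_self f
  rw [← sum_add_sum_compl {0, 1}, sum_pair zero_ne_one, Fintype.sum_eq_add_sum_compl 0,
    AddChar.map_zero_eq_one] at h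
  simp only [ne_eq, OfNat.ofNat_ne_zero, not_false_eq_true, zero_pow, one_pow,
    CharTwo.add_self_eq_zero] at h
  linear_combination h

lemma sum_canonAddChar_add_div_add_div {c x : F} (hc : c ≠ 0) (hx : x ≠ 0) :
    ∑ u ∈ {0, x}ᶜ, χ (x + c / u + c / (u + x)) = -χ x + ∑ t ∈ {0}ᶜ, χ (x + t + c / (x * t)) := by
  calc ∑ u ∈ {0, x}ᶜ, χ (x + c / u + c / (u + x))
      = ∑ r ∈ {0, 1}ᶜ, χ (x + c / (x * (r ^ 2 + r))) := by
        refine (sum_equiv (Equiv.mulLeft₀ x hx) (by simp [hx]) fun r hr => ?_).symm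
        simp only [mem_compl, mem_insert, mem_singleton, not_or] at hr
        have : c / (x * r) + c / (x * r + x) = c / x * (r⁻¹ + (r + 1)⁻¹) := by
          field_simp
        change χ (x + c / (x * (r ^ 2 + r))) = χ (x + c / (x * r) + c / (x * r + x))
        rw [add_assoc, this, inv_add_inv_add_one hr.1 hr.2, ← div_eq_mul_inv, div_div]
    _ = ∑ t ∈ {0}ᶜ, (1 + χ t) * χ (x + c / (x * t)) :=
        sum_compl_zero_one_sq_add_self fun t => χ (x + c / (x * t))
    _ = χ x * ∑ t ∈ {0}ᶜ, χ (c / x / t) + ∑ t ∈ {0}ᶜ, χ (x + t + c / (x * t)) := by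
        simp only [add_mul, one_mul, sum_add_distrib, mul_sum, ← AddChar.map_add_eq_mul,
          div_mul_eq_div_div, add_assoc, add_left_comm]
    _ = -χ x + ∑ t ∈ {0}ᶜ, χ (x + t + c / (x * t)) := by
        rw [sum_compl_zero_div (div_ne_zero hc hx) (fun t => χ t),
          AddChar.sum_compl_zero_eq_neg_one canonAddChar_ne_one, mul_neg_one]

lemma sq_sum_canonAddChar_add_div {c : F} (hc : c ≠ 0) :
    (∑ u ∈ {0}ᶜ, χ (u + c / u)) ^ 2
      = Fintype.card F + ∑ x ∈ {0}ᶜ, ∑ t ∈ {0}ᶜ, χ (x + t + c / (x * t)) := by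
  calc (∑ u ∈ {0}ᶜ, χ (u + c / u)) ^ 2
      = ∑ u ∈ {0}ᶜ, ∑ x ∈ {u}ᶜ, χ (x + c / u + c / (u + x)) := by
        rw [sq, sum_mul_sum]
        refine sum_congr rfl fun u _ => sum_equiv (Equiv.addLeft u) (by simp) fun v _ => ?_
        change χ (u + c / u) * χ (v + c / v) = χ (u + v + c / u + c / (u + (u + v)))
        rw [← AddChar.map_add_eq_mul, CharTwo.add_cancel_left]
        ring_nf
    _ = ∑ x, ∑ u ∈ {0, x}ᶜ, χ (x + c / u + c / (u + x)) := by
        refine sum_comm' fun u x => ?_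
        simp only [mem_compl, mem_insert, mem_singleton, mem_univ, and_true]
        tauto
    _ = (Fintype.card F - 1) + ∑ x ∈ {0}ᶜ, (-χ x + ∑ t ∈ {0}ᶜ, χ (x + t + c / (x * t))) := by
        rw [Fintype.sum_eq_add_sum_compl 0]
        congr 1
        · simp [CharTwo.add_self_eq_zero, card_compl, Nat.cast_sub Fintype.card_pos]
        · exact sum_congr rfl fun x hx => sum_canonAddChar_add_div_add_div hc (by simpa using hx)
    _ = Fintype.card F + ∑ x ∈ {0}ᶜ, ∑ t ∈ {0}ᶜ, χ (x + t + c / (x * t)) := by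
        rw [sum_add_distrib, sum_neg_distrib, AddChar.sum_compl_zero_eq_neg_one canonAddChar_ne_one]
        ring

end CharTwo

/-- (Carlitz.)  Let `F = F_q` be a finite field of characteristic 2 and
`c ∈ Fˣ`.  Then `k₂(c) = k₁(c)² − q` for the Kloosterman sums over `F`. -/
theorem stmt14 (F : Type*) [Field F] [Fintype F] [CharP F 2] (c : F) (hc : c ≠ 0) :
    kloos 2 F 2 c = (kloos 2 F 1 c) ^ 2 - (Fintype.card F : ℂ) := by
  classical
  rw [kloos_two, kloos_one, sq_sum_canonAddChar_add_div hc]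
  ring
end
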